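/- For n = 5, l = 1.05 and l̃ = 1, the 5-gonal Siamese system with parameters (l, l̃) has no positive solutions. (Geometrically: there exists no pentagonal Siamese dipyramid with faces congruent to Δ(1.05) and Δ(1).) -/
import Mathlib

set_option maxHeartbeats 2000000


/-- `(x, x̃) = p` is a positive solution of the `5`-gonal Siamese system with
parameters `(l, l̃)`. -/
def SiamesePosSol5 (l lt : ℝ) (p : ℝ × ℝ) : Prop :=
  0 < p.1 ∧ p.1 < 1 ∧ 0 < p.2 ∧ p.2 < 1 ∧
  l ≤ 2 * Real.sqrt (1 - p.1 ^ 2) ∧ lt ≤ 2 * Real.sqrt (1 - p.2 ^ 2) ∧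
  p.2 = Real.sqrt (1 - p.1 ^ 2) *
      Real.sin (5 * Real.arcsin (l / (2 * Real.sqrt (1 - p.1 ^ 2)))) ∧
  p.1 = Real.sqrt (1 - p.2 ^ 2) *
      Real.sin (5 * Real.arcsin (lt / (2 * Real.sqrt (1 - p.2 ^ 2))))

private lemma sin_five (θ : ℝ) :
    Real.sin (5 * θ) =
      16 * Real.sin θ ^ 5 - 20 * Real.sin θ ^ 3 + 5 * Real.sin θ := by
  have h5 : 5 * θ = 2 * θ + 3 * θ := by ring
  rw [h5, Real.sin_add, Real.sin_two_mul, Real.cos_two_mul, Real.sin_three_mul,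
    Real.cos_three_mul]
  have hc : Real.cos θ ^ 2 = 1 - Real.sin θ ^ 2 := Real.cos_sq' θ
  linear_combination (8 * Real.sin θ * Real.cos θ ^ 2 + 8 * Real.sin θ
    - 16 * Real.sin θ ^ 3) * hc

private lemma sin_five_arcsin {a : ℝ} (h0 : 0 ≤ a) (h1 : a ≤ 1) :
    Real.sin (5 * Real.arcsin a) = 16 * a ^ 5 - 20 * a ^ 3 + 5 * a := by
  rw [sin_five, Real.sin_arcsin (by linarith) h1]

/-- For `l = 1.05`, `l̃ = 1` there is no pentagonal Siamese dipyramid. -/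
theorem siamese_no_solution_105 :
    ∀ p : ℝ × ℝ, ¬ SiamesePosSol5 1.05 1 p := by
  rintro ⟨x, y⟩ ⟨hx0, hx1, hy0, hy1, hl, hlt, he1, he2⟩
  simp only at hx0 hx1 hy0 hy1 hl hlt he1 he2
  have h105 : (1.05 : ℝ) = 21 / 20 := by norm_num
  rw [h105] at hl he1
  -- basic facts about the square roots
  have hx2 : (0 : ℝ) ≤ 1 - x ^ 2 := by nlinarith
  have hy2 : (0 : ℝ) ≤ 1 - y ^ 2 := by nlinarith
  set s := Real.sqrt (1 - x ^ 2) with hs_def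
  set t := Real.sqrt (1 - y ^ 2) with ht_def
  have hs2 : s ^ 2 = 1 - x ^ 2 := Real.sq_sqrt hx2
  have ht2 : t ^ 2 = 1 - y ^ 2 := Real.sq_sqrt hy2
  have hsnn : 0 ≤ s := Real.sqrt_nonneg _
  have htnn : 0 ≤ t := Real.sqrt_nonneg _
  have hs0 : 0 < s := by nlinarith
  have ht0 : 0 < t := by nlinarith
  have hu : (441 / 1600 : ℝ) ≤ 1 - x ^ 2 := by nlinarith [hl, hs2, hsnn]
  have hv : (1 / 4 : ℝ) ≤ 1 - y ^ 2 := by nlinarith [hlt, ht2, htnn]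
  -- arguments of arcsin lie in [0,1]
  have ha0 : 0 ≤ 21 / 20 / (2 * s) := by positivity
  have ha1 : 21 / 20 / (2 * s) ≤ 1 := by
    rw [div_le_one (by linarith)]; linarith
  have hb0 : 0 ≤ 1 / (2 * t) := by positivity
  have hb1 : 1 / (2 * t) ≤ 1 := by
    rw [div_le_one (by linarith)]; linarith
  rw [sin_five_arcsin ha0 ha1] at he1
  rw [sin_five_arcsin hb0 hb1] at he2
  -- turn the two equations into polynomial equations
  have E1 : 2 * (1 - x ^ 2) ^ 2 * y =
      (21 / 20 : ℝ) ^ 5 - 5 * (21 / 20) ^ 3 * (1 - x ^ 2)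
        + 5 * (21 / 20) * (1 - x ^ 2) ^ 2 := by
    have key : 2 * s ^ 4 * y =
        (21 / 20 : ℝ) ^ 5 - 5 * (21 / 20) ^ 3 * s ^ 2 + 5 * (21 / 20) * s ^ 4 := by
      rw [he1]; field_simp; ring
    rw [← hs2]; linear_combination key
  have E2 : 2 * (1 - y ^ 2) ^ 2 * x =
      1 - 5 * (1 - y ^ 2) + 5 * (1 - y ^ 2) ^ 2 := by
    have key : 2 * t ^ 4 * x = 1 - 5 * t ^ 2 + 5 * t ^ 4 := by
      rw [he2]; field_simp; ring
    rw [← ht2]; linear_combination key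
  clear he1 he2 hl hlt ha0 ha1 hb0 hb1 hs2 ht2 hsnn htnn hs0 ht0 hx2 hy2
  -- abbreviate
  set u := 1 - x ^ 2 with hu_def
  set v := 1 - y ^ 2 with hv_def
  have hu1 : u ≤ 1 := by nlinarith
  have hv1 : v ≤ 1 := by nlinarith
  have hu0 : 0 < u := by linarith
  have hv0 : 0 < v := by linarith
  -- Step A : x ≤ 1/2, hence u ≥ 3/4
  have hA : x ≤ 1 / 2 := by
    nlinarith [E2, mul_nonneg (by linarith : (0:ℝ) ≤ 4 * v - 1)
      (by linarith : (0:ℝ) ≤ 1 - v), mul_pos hv0 hv0]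
  have hU0 : (3 / 4 : ℝ) ≤ u := by nlinarith
  -- Step 1 : y ≤ 37/100, hence v ≥ 8631/10000, hence x ≥ 137/500
  have hm0 : y ≤ 37 / 100 := by
    nlinarith [E1, mul_nonneg (by linarith : (0:ℝ) ≤ u - 3 / 4)
      (by linarith : (0:ℝ) ≤ 1 - u), mul_pos hu0 hu0]
  have hV0 : (8631 / 10000 : ℝ) ≤ v := by nlinarith
  have hc1 : (137 / 500 : ℝ) ≤ x := by
    nlinarith [E2, mul_nonneg (by linarith : (0:ℝ) ≤ v - 8631 / 10000)
      (by nlinarith : (0:ℝ) ≤ (5 - 2 * (137 / 500)) * (v + 8631 / 10000) - 5),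
      mul_pos hv0 hv0]
  -- Step 2
  have hU1 : u ≤ 231231 / 250000 := by nlinarith
  have hm1 : y ≤ 121 / 500 := by
    nlinarith [E1, mul_nonneg (by linarith : (0:ℝ) ≤ u - 3 / 4)
      (by linarith : (0:ℝ) ≤ 231231 / 250000 - u), mul_pos hu0 hu0]
  have hV1 : (235359 / 250000 : ℝ) ≤ v := by nlinarith
  have hc2 : (51 / 125 : ℝ) ≤ x := by
    nlinarith [E2, mul_nonneg (by linarith : (0:ℝ) ≤ v - 235359 / 250000)
      (by nlinarith : (0:ℝ) ≤ (5 - 2 * (51 / 125)) * (v + 235359 / 250000) - 5),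
      mul_pos hv0 hv0]
  -- Step 3
  have hU2 : u ≤ 13024 / 15625 := by nlinarith
  have hm2 : y ≤ 9 / 125 := by
    nlinarith [E1, mul_nonneg (by linarith : (0:ℝ) ≤ u - 3 / 4)
      (by linarith : (0:ℝ) ≤ 13024 / 15625 - u), mul_pos hu0 hu0]
  have hV2 : (15544 / 15625 : ℝ) ≤ v := by nlinarith
  have hc3 : (123 / 250 : ℝ) ≤ x := by
    nlinarith [E2, mul_nonneg (by linarith : (0:ℝ) ≤ v - 15544 / 15625)
      (by nlinarith : (0:ℝ) ≤ (5 - 2 * (123 / 250)) * (v + 15544 / 15625) - 5),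
      mul_pos hv0 hv0]
  -- Final contradiction : now u ≤ 47371/62500, where the rhs of E1 is negative
  have hU3 : u ≤ 47371 / 62500 := by nlinarith
  have hg : (21 / 20 : ℝ) ^ 5 - 5 * (21 / 20) ^ 3 * u + 5 * (21 / 20) * u ^ 2 < 0 := by
    nlinarith [mul_nonneg (by linarith : (0:ℝ) ≤ u - 3 / 4)
      (by linarith : (0:ℝ) ≤ 47371 / 62500 - u)]
  have hpos : 0 < 2 * u ^ 2 * y := by positivity
  rw [E1] at hpos
  linarith
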